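/- Let V be a finite type with decidable equality, let n : ℕ, let D D' : Fin n → Finset V be the per-argument ranges of two factors f g : (Fin n → V) → ℝ≥0. If there exists a multiset h : Multiset V such that Multiset.map f ((Finset.univ.filter (fun r => (∀ i, r i ∈ D i) ∧ hist r = h)).val) ≠ Multiset.map g ((Finset.univ.filter (fun r => (∀ i, r i ∈ D' i) ∧ hist r = h)).val), or if there is no bijection τ : Equiv.Perm (Fin n) with D i = D' (τ i) for all i, then f and g do not represent equivalent potentials: there is no permutation π : Equiv.Perm (Fin n) satisfying both D' i = D (π i) for all i and f r = g (r ∘ π) for every assignment r with r i ∈ D i for all i. -/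

import Mathlib

/-!
Reindexing the arguments by the permutation `π` of an equivalence, `r ↦ r ∘ π`, is a bijection
from the in-range assignments of the first factor onto those of the second that preserves
histograms and carries the potentials of `f` to those of `g`. Hence every histogram class has
the same multiset of potentials under both factors, and `π⁻¹` matches the ranges.
-/

open scoped NNReal

/-- The histogram of an assignment `r : Fin n → V` is the multiset of its values. -/
def hist {n : ℕ} {V : Type*} (r : Fin n → V) : Multiset V :=
  Multiset.map r Finset.univ.val

theorem hist_comp_perm {n : ℕ} {V : Type*} (σ : Equiv.Perm (Fin n)) (r : Fin n → V) :
    hist (r ∘ σ) = hist r := by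
  rw [hist, hist, ← Multiset.map_map, Multiset.map_univ_val_equiv]

section HistogramClasses

variable {V : Type*} [Fintype V] [DecidableEq V] {n : ℕ}

def inRangeWithHist (D : Fin n → Finset V) (h : Multiset V) : Finset (Fin n → V) :=
  Finset.univ.filter fun r => (∀ i, r i ∈ D i) ∧ hist r = h

theorem inRangeWithHist_eq_map_comp_perm {D D' : Fin n → Finset V} (π : Equiv.Perm (Fin n))
    (hD : ∀ i, D' i = D (π i)) (h : Multiset V) :
    inRangeWithHist D' h =
      (inRangeWithHist D h).map (π.symm.arrowCongr (Equiv.refl V)).toEmbedding := by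
  set e := π.symm.arrowCongr (Equiv.refl V)
  have he : ∀ r, e r = r ∘ π := fun _ => rfl
  rw [inRangeWithHist, ← Finset.map_univ_equiv e, Finset.filter_map, inRangeWithHist]
  congr 2
  ext r
  simp only [Function.comp_apply, Equiv.coe_toEmbedding, he, hist_comp_perm, hD]
  rw [π.forall_congr_right (q := fun j => r j ∈ D j)]

theorem map_inRangeWithHist_eq_of_perm {β : Type*} {D D' : Fin n → Finset V}
    {f g : (Fin n → V) → β} (π : Equiv.Perm (Fin n)) (hD : ∀ i, D' i = D (π i))
    (hf : ∀ r : Fin n → V, (∀ i, r i ∈ D i) → f r = g (r ∘ π)) (h : Multiset V) :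
    (inRangeWithHist D h).val.map f = (inRangeWithHist D' h).val.map g := by
  rw [inRangeWithHist_eq_map_comp_perm π hD, Finset.map_val, Multiset.map_map]
  exact Multiset.map_congr rfl fun r hr => hf r (Finset.mem_filter.1 hr).2.1

end HistogramClasses

/-- **Corollary 1.** If two factors violate the necessary conditions of Theorem 1 (either some
histogram has differing multisets of potentials, or no bijection matches the per-argument
ranges), then they cannot represent equivalent potentials. -/
theorem stmt_1 {V : Type*} [Fintype V] [DecidableEq V] (n : ℕ)
    (D D' : Fin n → Finset V) (f g : (Fin n → V) → ℝ≥0)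
    (hviol :
      (∃ h : Multiset V,
        Multiset.map f
          ((Finset.univ.filter (fun r : Fin n → V => (∀ i, r i ∈ D i) ∧ hist r = h)).val) ≠
        Multiset.map g
          ((Finset.univ.filter (fun r : Fin n → V => (∀ i, r i ∈ D' i) ∧ hist r = h)).val)) ∨
      ¬ ∃ τ : Equiv.Perm (Fin n), ∀ i, D i = D' (τ i)) :
    ¬ ∃ π : Equiv.Perm (Fin n), (∀ i, D' i = D (π i)) ∧
      ∀ r : Fin n → V, (∀ i, r i ∈ D i) → f r = g (r ∘ π) := by
  rintro ⟨π, hD, hf⟩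
  rcases hviol with ⟨h, hne⟩ | hτ
  · exact hne (map_inRangeWithHist_eq_of_perm π hD hf h)
  · exact hτ ⟨π.symm, fun i => by rw [hD, π.apply_symm_apply]⟩
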